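/- arXiv:1212.0966 — 2 statements merged into one kernel-verified Lean document; each statement's English description precedes it below -/
import Mathlib

section
/- For any elementary existential doctrine P, the canonical functor L : Q_P → E_P from the elementary quotient completion to the equivalence-relation part of the exact completion is well-defined (L[f] is independent of the representative f and is an arrow of E_P, L preserves identities and composition) and faithful. -/
open CategoryTheory CategoryTheory.Limits

universe u v w

/-- Layer 0: an indexed family of inf-semilattices over a category. -/
structure DocL0 (C : Type u) [Category.{v} C] where
  obj : C → Type w
  semi : ∀ A : C, SemilatticeInf (obj A)

attribute [instance] DocL0.semi

/-- Layer 1: fibrewise top elements. -/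
structure DocL1 (C : Type u) [Category.{v} C] extends DocL0.{u, v, w} C where
  otop : ∀ A : C, OrderTop (obj A)

attribute [instance] DocL1.otop

/-- A doctrine: an indexed inf-semilattice `P : Cᵒᵖ → InfSL`. -/
structure Doctrine (C : Type u) [Category.{v} C] extends DocL1.{u, v, w} C where
  map : ∀ {A B : C}, (A ⟶ B) → obj B → obj A
  map_id : ∀ (A : C) (x : obj A), map (𝟙 A) x = x
  map_comp : ∀ {A B D : C} (f : A ⟶ B) (g : B ⟶ D) (x : obj D),
    map (f ≫ g) x = map f (map g x)
  map_mono : ∀ {A B : C} (f : A ⟶ B), Monotone (map f)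
  map_inf : ∀ {A B : C} (f : A ⟶ B) (x y : obj B),
    map f (x ⊓ y) = map f x ⊓ map f y
  map_top : ∀ {A B : C} (f : A ⟶ B), map f (⊤ : obj B) = (⊤ : obj A)

/-- An elementary existential doctrine. -/
structure EED (C : Type u) [Category.{v} C] [HasBinaryProducts C] extends
    Doctrine.{u, v, w} C where
  delta : ∀ A : C, obj (A ⨯ A)
  elem_i : ∀ {A : C} (α : obj A) (β : obj (A ⨯ A)),
    map prod.fst α ⊓ delta A ≤ β ↔ α ≤ map (diag A) β
  elem_ii : ∀ {X A : C} (α : obj (X ⨯ A)) (β : obj ((X ⨯ A) ⨯ A)),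
    map prod.fst α ⊓ map (prod.lift (prod.fst ≫ prod.snd) prod.snd) (delta A) ≤ β ↔
      α ≤ map (prod.lift (𝟙 (X ⨯ A)) prod.snd) β
  ex : ∀ {A B : C}, (A ⟶ B) → obj A → obj B
  ex_adj : ∀ {A B : C} (f : A ⟶ B) (α : obj A) (β : obj B),
    ex f α ≤ β ↔ α ≤ map f β
  frobenius : ∀ {A B : C} (f : A ⟶ B) (α : obj B) (β : obj A),
    ex f (map f α ⊓ β) = α ⊓ ex f β
  beck_chevalley : ∀ {A A' B : C} (f : A' ⟶ A) (β : obj (A ⨯ B)),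
    ex prod.fst (map (prod.map f (𝟙 B)) β) = map f (ex prod.fst β)

namespace EED

variable {C : Type u} [Category.{v} C] [HasBinaryProducts C] (P : EED.{u, v, w} C)

/-- Relational composition `∃_{p₂}(P_{⟨p₁,p₂⟩}(θ) ∧ P_{⟨p₂,p₃⟩}(ζ))`. -/
noncomputable def comp {A B D : C} (θ : P.obj (A ⨯ B)) (ζ : P.obj (B ⨯ D)) : P.obj (A ⨯ D) :=
  P.ex (prod.lift (prod.fst ≫ prod.fst) prod.snd)
    (P.map prod.fst θ ⊓ P.map (prod.lift (prod.fst ≫ prod.snd) prod.snd) ζ)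

/-- Opposite relation `P_{⟨p₂,p₁⟩}(θ)`. -/
noncomputable def op {A B : C} (θ : P.obj (A ⨯ B)) : P.obj (B ⨯ A) :=
  P.map (prod.lift prod.snd prod.fst) θ

/-- `ρ ≤ P_{⟨p₂,p₁⟩}(ρ)`. -/
def SymmRel {A : C} (ρ : P.obj (A ⨯ A)) : Prop :=
  ρ ≤ P.map (prod.lift prod.snd prod.fst) ρ

/-- `P_{⟨p₁,p₂⟩}(ρ) ∧ P_{⟨p₂,p₃⟩}(ρ) ≤ P_{⟨p₁,p₃⟩}(ρ)` in `P((A×A)×A)`. -/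
def TransRel {A : C} (ρ : P.obj (A ⨯ A)) : Prop :=
  P.map prod.fst ρ ⊓ P.map (prod.lift (prod.fst ≫ prod.snd) prod.snd) ρ ≤
    P.map (prod.lift (prod.fst ≫ prod.fst) prod.snd) ρ

/-- `δ_A ≤ ρ`. -/
def ReflRel {A : C} (ρ : P.obj (A ⨯ A)) : Prop := P.delta A ≤ ρ

/-- A `P`-equivalence relation. -/
def EqRel {A : C} (ρ : P.obj (A ⨯ A)) : Prop :=
  P.ReflRel ρ ∧ P.SymmRel ρ ∧ P.TransRel ρ

/-- Conditions (i)–(v) for an arrow `φ : ⟨A,ρ⟩ → ⟨B,σ⟩` of the exact completion `T_P`. -/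
def IsArrow {A B : C} (ρ : P.obj (A ⨯ A)) (σ : P.obj (B ⨯ B)) (φ : P.obj (A ⨯ B)) : Prop :=
  (φ ≤ P.map (prod.lift prod.fst prod.fst) ρ ⊓ P.map (prod.lift prod.snd prod.snd) σ) ∧
  (P.map prod.fst ρ ⊓ P.map (prod.lift (prod.fst ≫ prod.snd) prod.snd) φ ≤
      P.map (prod.lift (prod.fst ≫ prod.fst) prod.snd) φ) ∧
  (P.map prod.fst φ ⊓ P.map (prod.lift (prod.fst ≫ prod.snd) prod.snd) σ ≤
      P.map (prod.lift (prod.fst ≫ prod.fst) prod.snd) φ) ∧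
  (P.map prod.fst φ ⊓ P.map (prod.lift (prod.fst ≫ prod.fst) prod.snd) φ ≤
      P.map (prod.lift (prod.fst ≫ prod.snd) prod.snd) σ) ∧
  (P.map (diag A) ρ ≤ P.ex prod.fst φ)

/-- The graph relation `L[f] = ∃_{p₂}(P_{⟨p₁,p₂⟩}(ρ) ∧ P_{⟨f∘p₂,p₃⟩}(σ))` in `P(A×B)`. -/
noncomputable def Lrel {A B : C} (f : A ⟶ B) (ρ : P.obj (A ⨯ A)) (σ : P.obj (B ⨯ B)) : P.obj (A ⨯ B) :=
  P.ex (prod.lift (prod.fst ≫ prod.fst) prod.snd)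
    (P.map prod.fst ρ ⊓ P.map (prod.lift (prod.fst ≫ prod.snd ≫ f) prod.snd) σ)

end EED

/-!
Under the hypotheses, `L[f]` is the pullback `σ(f a, b)` of `σ` along `f × 1`: the existential
quantifier in `L[f]` is eliminated by the one-point rule, using reflexivity of `ρ` and the fact that
`σ(f a, b)` is stable under `ρ` in `a`. The same one-point rule shows that composing the graph of `f`
with any relation stable under `σ` on the left just substitutes `f`, which gives functoriality. The
conditions on an arrow of `E_P` become the laws of the equivalence relation `σ`, and evaluating
`L[f] = L[f']` at `b = f' a'` gives back `ρ(a, a') ≤ σ(f a, f' a')`.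
-/

namespace EED

variable {C : Type u} [Category.{v} C] [HasBinaryProducts C] {P : EED.{u, v, w} C}

/-- `θ(a, b)` is stable under `ρ` in `a`: `ρ(a, a') ∧ θ(a', b) ≤ θ(a, b)`. -/
def IsLeftSaturated {A B : C} (ρ : P.obj (A ⨯ A)) (θ : P.obj (A ⨯ B)) : Prop :=
  P.map prod.fst ρ ⊓ P.map (prod.lift (prod.fst ≫ prod.snd) prod.snd) θ ≤
    P.map (prod.lift (prod.fst ≫ prod.fst) prod.snd) θ

variable {X A B D : C}

attribute [local simp] prod.lift_fst prod.lift_snd prod.lift_fst_assoc prod.lift_snd_assoc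

theorem map_le_map_comp_of_le_map {α : P.obj A} {β : P.obj B} {g : A ⟶ B}
    (h : α ≤ P.map g β) (x : X ⟶ A) : P.map x α ≤ P.map (x ≫ g) β := by
  rw [P.map_comp]
  exact P.map_mono x h

theorem le_map_ex (f : A ⟶ B) (α : P.obj A) : α ≤ P.map f (P.ex f α) :=
  (P.ex_adj f α _).1 le_rfl

theorem le_ex_of_le_map {d : B ⟶ A} {e : A ⟶ B} (hde : d ≫ e = 𝟙 B) {α : P.obj A}
    {β : P.obj B} (h : β ≤ P.map d α) : β ≤ P.ex e α :=
  calc β ≤ P.map d α := h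
    _ ≤ P.map (d ≫ e) (P.ex e α) := map_le_map_comp_of_le_map (le_map_ex e α) d
    _ = P.ex e α := by rw [hde, P.map_id]

/- The laws of a relation are read at generalized elements `x : X ⟶ A ⨯ A`, with the needed
equations between components as hypotheses; these are then discharged by `simp`. -/
theorem ReflRel.map_eq_top {ρ : P.obj (A ⨯ A)} (hρ : P.ReflRel ρ) {x : X ⟶ A ⨯ A}
    (hx : x ≫ prod.fst = x ≫ prod.snd) : P.map x ρ = ⊤ := by
  have hx : x = (x ≫ prod.fst) ≫ diag A := by ext <;> simp [hx]
  have hδ : P.map (diag A) (P.delta A) = ⊤ :=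
    top_le_iff.mp ((P.elem_i ⊤ (P.delta A)).1 inf_le_right)
  apply top_le_iff.mp
  rw [hx, P.map_comp, ← P.map_top (x ≫ prod.fst), ← hδ]
  exact P.map_mono _ (P.map_mono _ hρ)

theorem SymmRel.map_le {ρ : P.obj (A ⨯ A)} (hρ : P.SymmRel ρ) {x : X ⟶ A ⨯ A}
    (y : X ⟶ A ⨯ A) (h₁ : x ≫ prod.fst = y ≫ prod.snd) (h₂ : x ≫ prod.snd = y ≫ prod.fst) :
    P.map x ρ ≤ P.map y ρ := by
  have hy : y = x ≫ prod.lift prod.snd prod.fst := by ext <;> simp [h₁, h₂]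
  rw [hy]
  exact map_le_map_comp_of_le_map hρ x

theorem IsLeftSaturated.map_inf_map_le {ρ : P.obj (A ⨯ A)} {θ : P.obj (A ⨯ B)}
    (hθ : IsLeftSaturated ρ θ) {x : X ⟶ A ⨯ A} {y z : X ⟶ A ⨯ B}
    (h₁ : x ≫ prod.fst = z ≫ prod.fst) (h₂ : x ≫ prod.snd = y ≫ prod.fst)
    (h₃ : y ≫ prod.snd = z ≫ prod.snd) :
    P.map x ρ ⊓ P.map y θ ≤ P.map z θ := by
  set t : X ⟶ (A ⨯ A) ⨯ B := prod.lift x (y ≫ prod.snd)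
  have hx : x = t ≫ prod.fst := by simp [t]
  have hy : y = t ≫ prod.lift (prod.fst ≫ prod.snd) prod.snd := by ext <;> simp [t, h₂]
  have hz : z = t ≫ prod.lift (prod.fst ≫ prod.fst) prod.snd := by ext <;> simp [t, h₁, h₃]
  rw [hx, hy, hz, P.map_comp, P.map_comp, P.map_comp, ← P.map_inf]
  exact P.map_mono t hθ

theorem TransRel.isLeftSaturated {ρ : P.obj (A ⨯ A)} (hρ : P.TransRel ρ) :
    IsLeftSaturated ρ ρ := hρ

theorem ex_fst_eq_top {ρ : P.obj (A ⨯ A)} (hρ : P.ReflRel ρ) :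
    P.ex (prod.fst : A ⨯ A ⟶ A) ρ = ⊤ :=
  top_le_iff.mp (le_ex_of_le_map (by simp) (hρ.map_eq_top (x := diag A) (by simp)).ge)

theorem isLeftSaturated_map_prod_map {ρ : P.obj (A ⨯ A)} {σ : P.obj (B ⨯ B)}
    (hσ : P.TransRel σ) {f : A ⟶ B} (hf : ρ ≤ P.map (prod.map f f) σ) :
    IsLeftSaturated ρ (P.map (prod.map f (𝟙 B)) σ) := by
  unfold IsLeftSaturated
  simp only [← P.map_comp]
  exact (inf_le_inf_right _ (map_le_map_comp_of_le_map hf _)).trans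
    (hσ.isLeftSaturated.map_inf_map_le (by simp) (by simp) (by simp))

/-- One-point rule: composing the graph `σ(u a, b)` of `u` with `θ` substitutes `u a` in `θ`. -/
theorem comp_map_prod_map_id {σ : P.obj (B ⨯ B)} (hσ : P.ReflRel σ) (u : A ⟶ B)
    {θ : P.obj (B ⨯ D)} (hθ : IsLeftSaturated σ θ) :
    P.comp (P.map (prod.map u (𝟙 B)) σ) θ = P.map (prod.map u (𝟙 D)) θ := by
  apply le_antisymm
  · apply (P.ex_adj _ _ _).2
    simp only [← P.map_comp]
    exact hθ.map_inf_map_le (by simp) (by simp) (by simp)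
  · refine le_ex_of_le_map (d := prod.lift (prod.lift prod.fst (prod.fst ≫ u)) prod.snd)
      (by ext <;> simp) ?_
    simp only [P.map_inf, ← P.map_comp]
    rw [hσ.map_eq_top (by simp), top_inf_eq]
    exact le_of_eq (congrArg (P.map · θ) (by ext <;> simp))

theorem Lrel_eq_map_prod_map {ρ : P.obj (A ⨯ A)} {σ : P.obj (B ⨯ B)} (hρ : P.ReflRel ρ)
    (hσ : P.TransRel σ) {f : A ⟶ B} (hf : ρ ≤ P.map (prod.map f f) σ) :
    P.Lrel f ρ σ = P.map (prod.map f (𝟙 B)) σ := by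
  have h := comp_map_prod_map_id hρ (𝟙 A) (isLeftSaturated_map_prod_map hσ hf)
  simp only [prod.map_id_id, P.map_id] at h
  rw [← h, EED.Lrel, EED.comp, ← P.map_comp]
  congr 3
  ext <;> simp

theorem isArrow_map_prod_map {ρ : P.obj (A ⨯ A)} {σ : P.obj (B ⨯ B)} (hρ : P.ReflRel ρ)
    (hσ : P.EqRel σ) {f : A ⟶ B} (hf : ρ ≤ P.map (prod.map f f) σ) :
    P.IsArrow ρ σ (P.map (prod.map f (𝟙 B)) σ) := by
  obtain ⟨hσr, hσs, hσt⟩ := hσ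
  refine ⟨?_, isLeftSaturated_map_prod_map hσt hf, ?_, ?_, ?_⟩
  · rw [hρ.map_eq_top (x := prod.lift prod.fst prod.fst) (by simp),
      hσr.map_eq_top (x := prod.lift prod.snd prod.snd) (by simp)]
    exact le_inf le_top le_top
  · simp only [← P.map_comp]
    exact hσt.isLeftSaturated.map_inf_map_le (by simp) (by simp) (by simp)
  · simp only [← P.map_comp]
    exact (inf_le_inf_right _ (hσs.map_le (prod.lift (prod.fst ≫ prod.snd)
      (prod.fst ≫ prod.fst ≫ f)) (by simp) (by simp))).trans
      (hσt.isLeftSaturated.map_inf_map_le (by simp) (by simp) (by simp))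
  · rw [P.beck_chevalley, ex_fst_eq_top hσr, P.map_top]
    exact le_top

theorem le_map_prod_map_iff {ρ : P.obj (A ⨯ A)} {σ : P.obj (B ⨯ B)} (hρ : P.ReflRel ρ)
    (hσ : P.EqRel σ) {f f' : A ⟶ B} (hf' : ρ ≤ P.map (prod.map f' f') σ) :
    ρ ≤ P.map (prod.map f f') σ ↔
      P.map (prod.map f (𝟙 B)) σ = P.map (prod.map f' (𝟙 B)) σ := by
  obtain ⟨-, hσs, hσt⟩ := hσ
  constructor
  · intro h
    have hff' : ⊤ ≤ P.map (((prod.fst : A ⨯ B ⟶ A) ≫ diag A) ≫ prod.map f f') σ := by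
      rw [← hρ.map_eq_top (x := (prod.fst : A ⨯ B ⟶ A) ≫ diag A) (by simp)]
      exact map_le_map_comp_of_le_map h _
    have hf'f := hff'.trans (hσs.map_le (prod.lift (prod.fst ≫ f') (prod.fst ≫ f))
      (by simp) (by simp))
    apply le_antisymm
    · exact (le_inf (le_top.trans hf'f) le_rfl).trans
        (hσt.isLeftSaturated.map_inf_map_le (by simp) (by simp) (by simp))
    · exact (le_inf (le_top.trans hff') le_rfl).trans
        (hσt.isLeftSaturated.map_inf_map_le (by simp) (by simp) (by simp))
  · intro h
    have hff' : prod.lift prod.fst (prod.snd ≫ f') ≫ prod.map f (𝟙 B) = prod.map f f' := by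
      ext <;> simp
    have hf'f' : prod.lift prod.fst (prod.snd ≫ f') ≫ prod.map f' (𝟙 B) = prod.map f' f' := by
      ext <;> simp
    rwa [← hff', P.map_comp, h, ← P.map_comp, hf'f']

end EED

/-- the canonical functor `L : Q_P → E_P` is well defined
(`L[f]` does not depend on the representative and is an arrow of `E_P`, and
`L` preserves identities and composition) and faithful. -/
theorem L_well_defined_and_faithful
    {C : Type u} [Category.{v} C] [HasBinaryProducts C] (P : EED.{u, v, w} C)
    {A B D : C} (ρ : P.obj (A ⨯ A)) (σ : P.obj (B ⨯ B)) (τ : P.obj (D ⨯ D))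
    (hρ : P.EqRel ρ) (hσ : P.EqRel σ) (hτ : P.EqRel τ)
    (f f' : A ⟶ B) (g : B ⟶ D)
    (hf : ρ ≤ P.map (prod.map f f) σ) (hf' : ρ ≤ P.map (prod.map f' f') σ)
    (hg : σ ≤ P.map (prod.map g g) τ) :
    ((ρ ≤ P.map (prod.map f f') σ) ↔ P.Lrel f ρ σ = P.Lrel f' ρ σ) ∧
    P.IsArrow ρ σ (P.Lrel f ρ σ) ∧
    P.Lrel (𝟙 A) ρ ρ = ρ ∧
    P.Lrel (f ≫ g) ρ τ = P.comp (P.Lrel f ρ σ) (P.Lrel g σ τ) := by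
  have hfg : ρ ≤ P.map (prod.map (f ≫ g) (f ≫ g)) τ := by
    rw [← prod.map_map]
    exact hf.trans (EED.map_le_map_comp_of_le_map hg _)
  have hid : ρ ≤ P.map (prod.map (𝟙 A) (𝟙 A)) ρ := by rw [prod.map_id_id, P.map_id]
  rw [EED.Lrel_eq_map_prod_map hρ.1 hσ.2.2 hf, EED.Lrel_eq_map_prod_map hρ.1 hσ.2.2 hf',
    EED.Lrel_eq_map_prod_map hρ.1 hρ.2.2 hid, EED.Lrel_eq_map_prod_map hρ.1 hτ.2.2 hfg,
    EED.Lrel_eq_map_prod_map hσ.1 hτ.2.2 hg]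
  refine ⟨EED.le_map_prod_map_iff hρ.1 hσ hf', EED.isArrow_map_prod_map hρ.1 hσ hf,
    by rw [prod.map_id_id, P.map_id], ?_⟩
  rw [EED.comp_map_prod_map_id hσ.1 f (EED.isLeftSaturated_map_prod_map hτ.2.2 hg),
    ← P.map_comp, prod.map_map, Category.comp_id]
end

section
/- If an elementary existential doctrine P has full comprehensions, then every object ⟨A,ρ⟩ of the exact completion T_P is isomorphic in T_P to an object ⟨X,ρ'⟩ with ρ' a P-equivalence relation on X; hence the inclusion E_P ↪ T_P is an equivalence of categories. Here X is the domain of the comprehension of P_{⟨id,id⟩}(ρ) ∈ P(A). -/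
open CategoryTheory CategoryTheory.Limits

universe u v w

/-!
Let `α = P_{⟨id,id⟩}(ρ)` and let `c : X → A` be its comprehension. Fullness gives `α = ∃_c ⊤`, so
`c` covers the support of `ρ`, and `P_c(α) = ⊤` makes `ρ' = P_{c×c}(ρ)` reflexive. The isomorphism
is `ρ` itself, read as `φ(a, x) = ρ(a, c x)` and `ψ(x, a) = ρ(c x, a)`. Evaluated at generalized
elements, every condition on `φ` and `ψ` is an instance of the symmetry and transitivity of `ρ`,
except totality, which needs Beck–Chevalley (and `α = ∃_c ⊤` for `φ`), and `ρ ≤ φ ; ψ`: on the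
comprehension of `ρ` the first coordinate lies in `α`, hence factors through `c`.
-/

namespace EED

variable {C : Type u} [Category.{v} C] [HasBinaryProducts C] (P : EED.{u, v, w} C)

lemma le_map_ex_s17 {X Y : C} (f : X ⟶ Y) (a : P.obj X) : a ≤ P.map f (P.ex f a) :=
  (P.ex_adj f a _).1 le_rfl

lemma map_ex_top {X Y : C} (f : X ⟶ Y) : P.map f (P.ex f ⊤) = ⊤ :=
  top_le_iff.1 (P.le_map_ex_s17 f ⊤)

lemma map_le_map_comp_ex {X Y Z : C} (t : Z ⟶ X) (h : X ⟶ Y) (γ : P.obj X) :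
    P.map t γ ≤ P.map (t ≫ h) (P.ex h γ) := by
  rw [P.map_comp]
  exact P.map_mono t (P.le_map_ex_s17 h γ)

lemma ex_top_eq_of_full_comprehensions (cob : ∀ {A : C}, P.obj A → C)
    (cm : ∀ {A : C} (α : P.obj A), cob α ⟶ A)
    (hc_univ : ∀ {A : C} (α : P.obj A) {Z : C} (f : Z ⟶ A),
      P.map f α = ⊤ → ∃ g : Z ⟶ cob α, g ≫ cm α = f)
    (hc_full : ∀ {A : C} (α β : P.obj A) (k : cob α ⟶ cob β),
      k ≫ cm β = cm α → α ≤ β)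
    {A : C} (α : P.obj A) (hα : P.map (cm α) α = ⊤) : P.ex (cm α) ⊤ = α := by
  refine le_antisymm ((P.ex_adj _ _ _).2 hα.ge) ?_
  obtain ⟨k, hk⟩ := hc_univ (P.ex (cm α) ⊤) (cm α) (P.map_ex_top (cm α))
  exact hc_full α _ k hk

noncomputable def relAt {A B Z : C} (x : P.obj (A ⨯ B)) (u : Z ⟶ A) (v : Z ⟶ B) : P.obj Z :=
  P.map (prod.lift u v) x

lemma map_eq_relAt {A B Z : C} (f : Z ⟶ A ⨯ B) (x : P.obj (A ⨯ B)) :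
    P.map f x = P.relAt x (f ≫ prod.fst) (f ≫ prod.snd) := by
  rw [relAt, ← prod.comp_lift, prod.lift_fst_snd, Category.comp_id]

variable {P} {A : C} {ρ : P.obj (A ⨯ A)}

lemma SymmRel.relAt_le (hs : P.SymmRel ρ) {Z : C} (u v : Z ⟶ A) :
    P.relAt ρ u v ≤ P.relAt ρ v u := by
  simpa only [relAt, ← P.map_comp, prod.comp_lift, prod.lift_fst, prod.lift_snd]
    using P.map_mono (prod.lift u v) hs

lemma TransRel.relAt_le (ht : P.TransRel ρ) {Z : C} (u v w : Z ⟶ A) :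
    P.relAt ρ u v ⊓ P.relAt ρ v w ≤ P.relAt ρ u w := by
  simpa only [relAt, P.map_inf, ← P.map_comp, prod.comp_lift, prod.lift_fst, prod.lift_snd,
    prod.lift_fst_assoc, prod.lift_snd_assoc] using P.map_mono (prod.lift (prod.lift u v) w) ht

lemma relAt_le_relAt_left (hs : P.SymmRel ρ) (ht : P.TransRel ρ) {Z : C} (u v : Z ⟶ A) :
    P.relAt ρ u v ≤ P.relAt ρ u u :=
  (le_inf le_rfl (hs.relAt_le u v)).trans (ht.relAt_le u v u)

lemma relAt_le_relAt_right (hs : P.SymmRel ρ) (ht : P.TransRel ρ) {Z : C} (u v : Z ⟶ A) :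
    P.relAt ρ u v ≤ P.relAt ρ v v :=
  (le_inf (hs.relAt_le u v) le_rfl).trans (ht.relAt_le v u v)

variable (P) in
lemma reflRel_of_map_diag_eq_top (h : P.map (diag A) ρ = ⊤) : P.ReflRel ρ := by
  simpa only [ReflRel, P.map_top, top_inf_eq] using (P.elem_i (⊤ : P.obj A) ρ).2 h.ge

variable (P) in
lemma map_diag_le_ex_fst : P.map (diag A) ρ ≤ P.ex prod.fst ρ := by
  simpa only [← P.map_comp, prod.lift_fst, P.map_id]
    using P.map_mono (diag A) (P.le_map_ex_s17 prod.fst ρ)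

section Cover

variable {X : C} (c : X ⟶ A)

lemma map_diag_map_prod_map :
    P.map (diag X) (P.map (prod.map c c) ρ) = P.map c (P.map (diag A) ρ) := by
  simp only [← P.map_comp]
  congr 1
  ext <;> simp

lemma map_diag_map_prod_map_eq_top (hc : P.ex c ⊤ = P.map (diag A) ρ) :
    P.map (diag X) (P.map (prod.map c c) ρ) = ⊤ := by
  rw [map_diag_map_prod_map, ← hc, P.map_ex_top]

lemma eqRel_map_prod_map (hs : P.SymmRel ρ) (ht : P.TransRel ρ)
    (hc : P.ex c ⊤ = P.map (diag A) ρ) : P.EqRel (P.map (prod.map c c) ρ) := by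
  refine ⟨P.reflRel_of_map_diag_eq_top (map_diag_map_prod_map_eq_top c hc), ?_, ?_⟩
  -- `↓` collapses nested pullbacks before `map_eq_relAt` can fire on the inner one.
  all_goals
    simp only [SymmRel, TransRel, ↓← P.map_comp, P.map_eq_relAt, Category.assoc, prod.map_fst,
      prod.map_snd, prod.lift_fst_assoc, prod.lift_snd_assoc]
  · exact hs.relAt_le _ _
  · exact ht.relAt_le _ _ _

lemma isArrow_map_prod_map_id_left (hs : P.SymmRel ρ) (ht : P.TransRel ρ)
    (hc : P.ex c ⊤ = P.map (diag A) ρ) :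
    P.IsArrow ρ (P.map (prod.map c c) ρ) (P.map (prod.map (𝟙 A) c) ρ) := by
  refine ⟨le_inf ?_ ?_, ?_, ?_, ?_, ?total⟩
  case total =>
    rw [← hc, P.ex_adj, ← P.beck_chevalley, ← P.map_comp, prod.map_map, Category.comp_id,
      Category.id_comp]
    exact (map_diag_map_prod_map_eq_top c hc).ge.trans P.map_diag_le_ex_fst
  all_goals
    simp only [↓← P.map_comp, P.map_eq_relAt, Category.assoc, prod.lift_fst, prod.lift_snd,
      prod.map_fst, prod.map_snd, prod.lift_fst_assoc, prod.lift_snd_assoc, Category.comp_id]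
  · exact relAt_le_relAt_left hs ht _ _
  · exact relAt_le_relAt_right hs ht _ _
  · exact ht.relAt_le _ _ _
  · exact ht.relAt_le _ _ _
  · exact (inf_le_inf_right _ (hs.relAt_le _ _)).trans (ht.relAt_le _ _ _)

lemma isArrow_map_prod_map_id_right (hs : P.SymmRel ρ) (ht : P.TransRel ρ) :
    P.IsArrow (P.map (prod.map c c) ρ) ρ (P.map (prod.map c (𝟙 A)) ρ) := by
  refine ⟨le_inf ?_ ?_, ?_, ?_, ?_, ?total⟩
  case total =>
    rw [map_diag_map_prod_map, P.beck_chevalley]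
    exact P.map_mono c P.map_diag_le_ex_fst
  all_goals
    simp only [↓← P.map_comp, P.map_eq_relAt, Category.assoc, prod.lift_fst, prod.lift_snd,
      prod.map_fst, prod.map_snd, prod.lift_fst_assoc, prod.lift_snd_assoc, Category.comp_id]
  · exact relAt_le_relAt_left hs ht _ _
  · exact relAt_le_relAt_right hs ht _ _
  · exact ht.relAt_le _ _ _
  · exact ht.relAt_le _ _ _
  · exact (inf_le_inf_right _ (hs.relAt_le _ _)).trans (ht.relAt_le _ _ _)

lemma comp_map_prod_map_le (ht : P.TransRel ρ) :
    P.comp (P.map (prod.map (𝟙 A) c) ρ) (P.map (prod.map c (𝟙 A)) ρ) ≤ ρ := by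
  rw [comp, P.ex_adj]
  simp only [↓← P.map_comp, P.map_eq_relAt, Category.assoc, prod.lift_fst, prod.lift_snd,
    prod.map_fst, prod.map_snd, prod.lift_fst_assoc, Category.comp_id]
  exact ht.relAt_le _ _ _

lemma comp_map_prod_map_eq (hs : P.SymmRel ρ) (ht : P.TransRel ρ) :
    P.comp (P.map (prod.map c (𝟙 A)) ρ) (P.map (prod.map (𝟙 A) c) ρ) =
      P.map (prod.map c c) ρ := by
  rw [comp]
  refine le_antisymm ?_ ?_
  · rw [P.ex_adj]
    simp only [↓← P.map_comp, P.map_eq_relAt, Category.assoc, prod.lift_fst,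
      prod.map_fst, prod.map_snd, prod.lift_fst_assoc, prod.lift_snd_assoc, Category.comp_id]
    exact ht.relAt_le _ _ _
  · let t : X ⨯ X ⟶ (X ⨯ A) ⨯ X := prod.lift (prod.lift prod.fst (prod.fst ≫ c)) prod.snd
    have ht_section : t ≫ prod.lift (prod.fst ≫ prod.fst) prod.snd = 𝟙 _ := by
      ext <;> simp only [t, Category.assoc, prod.lift_fst, prod.lift_snd, prod.lift_fst_assoc,
        Category.id_comp]
    refine le_trans ?_ ((P.map_le_map_comp_ex t _ _).trans_eq (by rw [ht_section, P.map_id]))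
    simp only [t, ↓← P.map_comp, ↓P.map_inf, P.map_eq_relAt, Category.assoc, prod.lift_fst,
      prod.lift_snd, prod.map_fst, prod.map_snd, prod.lift_fst_assoc, prod.lift_snd_assoc,
      Category.comp_id]
    exact le_inf (relAt_le_relAt_left hs ht _ _) le_rfl

lemma le_comp_map_prod_map (hs : P.SymmRel ρ) (ht : P.TransRel ρ)
    (hfac : ∀ {Z : C} (f : Z ⟶ A), P.map f (P.map (diag A) ρ) = ⊤ →
      ∃ g : Z ⟶ X, g ≫ c = f)
    {Y : C} (m : Y ⟶ A ⨯ A) (hm : P.ex m ⊤ = ρ) :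
    ρ ≤ P.comp (P.map (prod.map (𝟙 A) c) ρ) (P.map (prod.map c (𝟙 A)) ρ) := by
  have hmρ : P.relAt ρ (m ≫ prod.fst) (m ≫ prod.snd) = ⊤ := by
    rw [← P.map_eq_relAt, ← hm, P.map_ex_top]
  obtain ⟨g, hg⟩ := hfac (m ≫ prod.fst) <| by
    simp only [↓← P.map_comp, P.map_eq_relAt, Category.assoc, prod.lift_fst, prod.lift_snd,
      Category.comp_id]
    exact top_le_iff.1 (hmρ.ge.trans (relAt_le_relAt_left hs ht _ _))
  let t : Y ⟶ (A ⨯ X) ⨯ A := prod.lift (prod.lift (m ≫ prod.fst) g) (m ≫ prod.snd)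
  have ht_lift : t ≫ prod.lift (prod.fst ≫ prod.fst) prod.snd = m := by
    ext <;> simp only [t, Category.assoc, prod.lift_fst, prod.lift_snd, prod.lift_fst_assoc]
  rw [comp]
  refine hm.symm.le.trans ((P.ex_adj _ _ _).2 ?_)
  rw [← ht_lift]
  refine le_trans ?_ (P.map_le_map_comp_ex t _ _)
  simp only [t, ↓← P.map_comp, ↓P.map_inf, P.map_eq_relAt, Category.assoc, prod.lift_fst,
    prod.lift_snd, prod.map_fst, prod.map_snd, prod.lift_fst_assoc, prod.lift_snd_assoc,
    Category.comp_id, hg]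
  exact le_inf (hmρ.ge.trans (relAt_le_relAt_left hs ht _ _)) hmρ.ge

end Cover

end EED

/-- if `P` has full comprehensions then every object `⟨A,ρ⟩` of
`T_P` is isomorphic in `T_P` to an object `⟨X,ρ'⟩` with `ρ'` a `P`-equivalence
relation, where `X` is the domain of the comprehension of `P_{⟨id,id⟩}(ρ)`;
hence the inclusion `E_P ↪ T_P` is an equivalence. -/
theorem EP_equivalent_TP_of_full_comprehensions
    {C : Type u} [Category.{v} C] [HasBinaryProducts C] (P : EED.{u, v, w} C)
    (cob : ∀ {A : C}, P.obj A → C) (cm : ∀ {A : C} (α : P.obj A), cob α ⟶ A)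
    (hc_top : ∀ {A : C} (α : P.obj A), P.map (cm α) α = ⊤)
    (hc_univ : ∀ {A : C} (α : P.obj A) {Z : C} (f : Z ⟶ A),
      P.map f α = ⊤ → ∃! g : Z ⟶ cob α, g ≫ cm α = f)
    (hc_full : ∀ {A : C} (α β : P.obj A) (k : cob α ⟶ cob β),
      k ≫ cm β = cm α → α ≤ β)
    {A : C} (ρ : P.obj (A ⨯ A)) (hρ : P.SymmRel ρ ∧ P.TransRel ρ) :
    letI c : cob (P.map (diag A) ρ) ⟶ A := cm (P.map (diag A) ρ)
    letI ρ' := P.map (prod.map c c) ρ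
    P.EqRel ρ' ∧
    ∃ (φ : P.obj (A ⨯ cob (P.map (diag A) ρ)))
      (ψ : P.obj (cob (P.map (diag A) ρ) ⨯ A)),
      P.IsArrow ρ ρ' φ ∧ P.IsArrow ρ' ρ ψ ∧
      P.comp φ ψ = ρ ∧ P.comp ψ φ = ρ' := by
  obtain ⟨hs, ht⟩ := hρ
  have hex : ∀ {B : C} (β : P.obj B), P.ex (cm β) ⊤ = β := fun β =>
    P.ex_top_eq_of_full_comprehensions @cob @cm (@fun _ α _ f hf => (hc_univ α f hf).exists)
      hc_full β (hc_top β)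
  have hc := hex (P.map (diag A) ρ)
  exact ⟨P.eqRel_map_prod_map _ hs ht hc, _, _, P.isArrow_map_prod_map_id_left _ hs ht hc,
    P.isArrow_map_prod_map_id_right _ hs ht,
    le_antisymm (P.comp_map_prod_map_le _ ht)
      (P.le_comp_map_prod_map _ hs ht (fun f hf => (hc_univ _ f hf).exists) (cm ρ) (hex ρ)),
    P.comp_map_prod_map_eq _ hs ht⟩
end
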